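/- Let A be a Novikov algebra over a field k of characteristic zero. Then the center Z(A) is a two-sided ideal of A; that is, for all z ∈ Z(A) and a ∈ A, both a·z and z·a lie in Z(A). -/

import Mathlib

/-!
For `z` central, left-symmetry gives `z(xy) = x(zy)`, and right-commutativity `(xy)z = (xz)y`
lets `z` be moved through a product to show `z(xy) = z(yx)`. Then
`(az)y = (ay)z = z(ay) = z(ya) = y(za) = y(az)`, so `az = za` is central.
-/

section CentralElement

variable {A : Type*} (mul : A → A → A) {z : A}

theorem mul_mul_left_comm_of_central [AddGroup A]
    (hls : ∀ x y w : A,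
      mul x (mul y w) - mul (mul x y) w = mul y (mul x w) - mul (mul y x) w)
    (hz : ∀ y : A, mul z y = mul y z) (x y : A) :
    mul z (mul x y) = mul x (mul z y) := by
  have h := hls z x y
  rw [hz x] at h
  exact sub_left_inj.mp h

theorem central_mul_mul_comm (hnov : ∀ x y w : A, mul (mul x y) w = mul (mul x w) y)
    (hz : ∀ y : A, mul z y = mul y z) (x y : A) :
    mul z (mul x y) = mul z (mul y x) :=
  calc mul z (mul x y) = mul (mul x z) y := by rw [hz, hnov]
    _ = mul (mul z y) x := by rw [← hz x, hnov]
    _ = mul z (mul y x) := by rw [hz y, ← hnov, hz]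

theorem mul_central_isCentral [AddGroup A]
    (hls : ∀ x y w : A,
      mul x (mul y w) - mul (mul x y) w = mul y (mul x w) - mul (mul y x) w)
    (hnov : ∀ x y w : A, mul (mul x y) w = mul (mul x w) y)
    (hz : ∀ y : A, mul z y = mul y z) (a y : A) :
    mul (mul a z) y = mul y (mul a z) :=
  calc mul (mul a z) y = mul z (mul a y) := by rw [hnov, hz]
    _ = mul z (mul y a) := central_mul_mul_comm mul hnov hz a y
    _ = mul y (mul z a) := mul_mul_left_comm_of_central mul hls hz y a
    _ = mul y (mul a z) := by rw [hz a]

end CentralElement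

theorem novikov_center_ideal
    {k A : Type*} [Field k] [AddCommGroup A] [Module k A]
    (mul : A →ₗ[k] A →ₗ[k] A)
    (hls : ∀ x y z : A,
      mul x (mul y z) - mul (mul x y) z = mul y (mul x z) - mul (mul y x) z)
    (hnov : ∀ x y z : A, mul (mul x y) z = mul (mul x z) y)
    (z : A) (hz : ∀ y : A, mul z y = mul y z) (a : A) :
    (∀ y : A, mul (mul a z) y = mul y (mul a z)) ∧
    (∀ y : A, mul (mul z a) y = mul y (mul z a)) := by
  have haz := mul_central_isCentral (fun x y => mul x y) hls hnov hz a
  exact ⟨haz, by rw [hz a]; exact haz⟩
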